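/- arXiv:2108.00504 — 2 statements merged into one kernel-verified Lean document; each statement's English description precedes it below -/
import Mathlib

section
/- Let $S$ be a commutative local ring with maximal ideal $\mathfrak{m}$ and algebraically closed residue field, and let $g \in S[u]$ be a monic polynomial of degree $n$. If the reduction of $g$ modulo $\mathfrak{m}$ has at most $r$ distinct roots in the residue field, then the discriminant of $g$ lies in $\mathfrak{m}^{n-r}$. -/
/-- The Sylvester matrix of `f` (viewed with coefficients `a_0, ..., a_n`, `a_k = f.coeff (n-k)`)
and `g` (with coefficients `b_0, ..., b_m`): the first `m` rows are shifts of the coefficient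
sequence of `f`, the last `n` rows are shifts of the coefficient sequence of `g`. -/
noncomputable def sylvester (S : Type) [CommRing S] (n m : ℕ) (f g : Polynomial S) :
    Matrix (Fin (n + m)) (Fin (n + m)) S :=
  Matrix.of fun i j =>
    if (i : ℕ) < m then
      (if (i : ℕ) ≤ (j : ℕ) ∧ (j : ℕ) ≤ (i : ℕ) + n then f.coeff (n - ((j : ℕ) - (i : ℕ)))
       else 0)
    else
      (if (i : ℕ) - m ≤ (j : ℕ) ∧ (j : ℕ) ≤ ((i : ℕ) - m) + m then
        g.coeff (m - ((j : ℕ) - ((i : ℕ) - m)))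
      else 0)

/-- The discriminant of a polynomial, defined (up to the standard sign) as the determinant
of the Sylvester matrix of `f` and its derivative. -/
noncomputable def polyDisc (S : Type) [CommRing S] (f : Polynomial S) : S :=
  (-1 : S) ^ (f.natDegree * (f.natDegree - 1) / 2) *
    (sylvester S f.natDegree (f.natDegree - 1) f (Polynomial.derivative f)).det

/-!
Over the residue field, write `ḡ = ∏ (X - a) ^ μₐ` over its `K ≤ r` distinct roots `a`. Then
`c = ∏ (X - a) ^ (μₐ - 1)`, of degree `n - K`, divides both `ḡ` and `ḡ'`, so the map
`(p, q) ↦ ḡ q + ḡ' p`, whose matrix is the reduced Sylvester matrix, has a kernel of dimension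
at least `n - K`. If the reduction of a square matrix over a local ring has a `d`-dimensional
kernel, multiplying by a suitable invertible matrix puts `d` of its columns into `𝔪`, so its
determinant lies in `𝔪 ^ d`.
-/

open scoped Polynomial Matrix
open Function Module

theorem sylvester_eq_transpose_submatrix {R : Type} [CommRing R] (n m : ℕ) (f g : R[X]) :
    sylvester R n m f g = ((f.sylvester g n m).submatrix Fin.rev Fin.rev)ᵀ := by
  ext i j
  obtain ⟨c, rfl⟩ := Fin.revPerm.surjective i
  simp only [Fin.revPerm_apply, Matrix.transpose_apply, Matrix.submatrix_apply, Fin.rev_rev]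
  induction c using Fin.addCases with
  | left c =>
    simp only [sylvester, Polynomial.sylvester, Matrix.of_apply, Fin.addCases_left, Fin.val_rev,
      Fin.val_castAdd, Set.mem_Icc]
    rw [if_neg (by omega)]
    split_ifs <;> first | rfl | omega | (congr 1; omega)
  | right c =>
    simp only [sylvester, Polynomial.sylvester, Matrix.of_apply, Fin.addCases_right, Fin.val_rev,
      Fin.val_natAdd, Set.mem_Icc]
    rw [if_pos (by omega)]
    split_ifs <;> first | rfl | omega | (congr 1; omega)

theorem det_sylvester {R : Type} [CommRing R] (n m : ℕ) (f g : R[X]) :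
    (sylvester R n m f g).det = f.resultant g n m := by
  rw [sylvester_eq_transpose_submatrix, Matrix.det_transpose]
  exact Matrix.det_submatrix_equiv_self Fin.revPerm _

theorem Module.Basis.sumExtend_apply_inl {K V ι : Type*} [DivisionRing K] [AddCommGroup V]
    [Module K V] {v : ι → V} (hv : LinearIndependent K v) (i : ι) :
    Basis.sumExtend hv (Sum.inl i) = v i := by
  simp only [Basis.sumExtend, Basis.reindex_apply, Basis.coe_extend]
  rfl

theorem LinearMap.finrank_ker_le_finrank_ker_toMatrix {K M₁ M₂ ι₁ ι₂ : Type*} [Field K]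
    [AddCommGroup M₁] [Module K M₁] [AddCommGroup M₂] [Module K M₂]
    [Fintype ι₁] [Finite ι₂] [DecidableEq ι₁] (b₁ : Basis ι₁ K M₁) (b₂ : Basis ι₂ K M₂)
    (f : M₁ →ₗ[K] M₂) :
    finrank K (ker f) ≤ finrank K (ker (toMatrix b₁ b₂ f).mulVecLin) := by
  rw [← LinearEquiv.finrank_map_eq b₁.equivFun]
  refine Submodule.finrank_mono ?_
  rintro _ ⟨x, hx, rfl⟩
  rw [SetLike.mem_coe, mem_ker] at hx
  rw [mem_ker, Matrix.mulVecLin_apply, LinearEquiv.coe_coe, Basis.equivFun_apply,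
    toMatrix_mulVec_repr, hx, map_zero]
  rfl

theorem Matrix.det_mem_pow_card_of_col_mem {S ι : Type*} [CommRing S] [Fintype ι]
    [DecidableEq ι] {M : Matrix ι ι S} {I : Ideal S} (T : Finset ι)
    (hT : ∀ j ∈ T, ∀ i, M i j ∈ I) :
    M.det ∈ I ^ T.card := by
  rw [Matrix.det_apply']
  refine Ideal.sum_mem _ fun σ _ => Ideal.mul_mem_left _ _ ?_
  rw [← Finset.prod_mul_prod_compl T, ← Finset.prod_const]
  exact Ideal.mul_mem_right _ _ (Ideal.prod_mem_prod fun j hj => hT j hj _)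

namespace IsLocalRing

theorem det_mem_maximalIdeal_pow_finrank_ker {S ι : Type*} [CommRing S] [IsLocalRing S]
    [Fintype ι] [DecidableEq ι] (M : Matrix ι ι S) :
    M.det ∈ maximalIdeal S ^
      finrank (ResidueField S) (LinearMap.ker (M.map (residue S)).mulVecLin) := by
  set k := ResidueField S
  set W := LinearMap.ker (M.map (residue S)).mulVecLin
  have hv : LinearIndependent k fun i => (finBasis k W i : ι → k) :=
    (finBasis k W).linearIndependent.map' W.subtype W.ker_subtype
  set e := (Basis.sumExtend hv).indexEquiv (Pi.basisFun k ι)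
  set B := (Basis.sumExtend hv).reindex e
  set Q : Matrix ι ι S := ((Pi.basisFun k ι).toMatrix B).map (surjInv residue_surjective)
  have hQ : Q.map (residue S) = (Pi.basisFun k ι).toMatrix B := by
    ext i j
    exact surjInv_eq residue_surjective _
  have hQdet : IsUnit Q.det := by
    rw [← notMem_maximalIdeal, ← residue_eq_zero_iff, RingHom.map_det, RingHom.mapMatrix_apply,
      hQ, ← Basis.det_apply]
    exact ((Pi.basisFun k ι).isUnit_det B).ne_zero
  set T := Finset.univ.map (Embedding.inl.trans e.toEmbedding)
  have hT : ∀ j ∈ T, ∀ i, (M * Q) i j ∈ maximalIdeal S := by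
    intro j hj i
    obtain ⟨l, -, rfl⟩ := Finset.mem_map.mp hj
    have hB : B (e (Sum.inl l)) = finBasis k W l := by
      rw [Basis.reindex_apply, Equiv.symm_apply_apply, Basis.sumExtend_apply_inl]
    rw [← residue_eq_zero_iff, ← Matrix.map_apply (f := residue S), Matrix.map_mul, hQ]
    simp only [Embedding.trans_apply, Embedding.inl_apply, Equiv.coe_toEmbedding,
      Matrix.mul_apply, Basis.toMatrix_apply, Pi.basisFun_repr, hB]
    exact congr_fun (finBasis k W l).2 i
  have hcard : T.card = finrank k W := by simp [T]
  rw [← hcard, ← Ideal.mul_unit_mem_iff_mem _ hQdet, ← Matrix.det_mul]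
  exact Matrix.det_mem_pow_card_of_col_mem T hT

end IsLocalRing

namespace Polynomial

theorem exists_dvd_dvd_derivative {K : Type*} [Field K] [DecidableEq K] {f : K[X]}
    (hf : f ≠ 0) :
    ∃ c : K[X], c ∣ f ∧ c ∣ derivative f ∧
      c.natDegree + f.roots.toFinset.card = Multiset.card f.roots := by
  have hcoprime : (f.roots.toFinset : Set K).Pairwise
      (IsCoprime on fun a => (X - C a) ^ (f.rootMultiplicity a - 1)) :=
    fun a _ b _ hab => (pairwise_coprime_X_sub_C injective_id hab).pow
  refine ⟨∏ a ∈ f.roots.toFinset, (X - C a) ^ (f.rootMultiplicity a - 1),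
    Finset.prod_dvd_of_coprime hcoprime fun a _ =>
      (pow_dvd_pow _ (Nat.sub_le _ _)).trans (pow_rootMultiplicity_dvd f a),
    Finset.prod_dvd_of_coprime hcoprime fun a _ =>
      pow_sub_one_dvd_derivative_of_pow_dvd (pow_rootMultiplicity_dvd f a), ?_⟩
  rw [natDegree_prod _ _ fun a _ => pow_ne_zero _ (X_sub_C_ne_zero a),
    ← Multiset.toFinset_sum_count_eq, Finset.card_eq_sum_ones, ← Finset.sum_add_distrib]
  refine Finset.sum_congr rfl fun a ha => ?_
  have := (rootMultiplicity_pos hf).mpr (isRoot_of_mem_roots (Multiset.mem_toFinset.mp ha))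
  rw [natDegree_pow, natDegree_X_sub_C, count_roots]
  omega

theorem mul_mem_degreeLT_of_natDegree_mul_le {K : Type*} [Field K] {c h u : K[X]} {m : ℕ}
    (hh : h ∈ degreeLT K c.natDegree) (hcu : (c * u).natDegree ≤ m) :
    h * u ∈ degreeLT K m := by
  rcases eq_or_ne h 0 with rfl | h0
  · simp
  rcases eq_or_ne u 0 with rfl | u0
  · simp
  have c0 : c ≠ 0 := by
    rintro rfl
    exact h0 (by simpa [mem_degreeLT] using hh)
  rw [mem_degreeLT, ← natDegree_lt_iff_degree_lt h0] at hh
  rw [mem_degreeLT, ← natDegree_lt_iff_degree_lt (mul_ne_zero h0 u0), natDegree_mul h0 u0]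
  rw [natDegree_mul c0 u0] at hcu
  omega

theorem natDegree_le_finrank_ker_sylvesterMap {K : Type*} [Field K] {m n : ℕ}
    {f g c : K[X]} (hf : f.natDegree ≤ m) (hg : g.natDegree ≤ n) (hf0 : f ≠ 0)
    (hcf : c ∣ f) (hcg : c ∣ g) :
    c.natDegree ≤ finrank K (LinearMap.ker (sylvesterMap f g hf hg)) := by
  obtain ⟨u, rfl⟩ := hcf
  obtain ⟨v, rfl⟩ := hcg
  let Ψ : degreeLT K c.natDegree →ₗ[K] degreeLT K m × degreeLT K n :=
    { toFun h := (⟨-(h * u), neg_mem (mul_mem_degreeLT_of_natDegree_mul_le h.2 hf)⟩,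
        ⟨h * v, mul_mem_degreeLT_of_natDegree_mul_le h.2 hg⟩)
      map_add' _ _ := by ext1 <;> simp [add_mul, add_comm]
      map_smul' _ _ := by ext <;> simp }
  have hΨ : ∀ h, Ψ h ∈ LinearMap.ker (sylvesterMap _ _ hf hg) := fun h => by
    ext1
    simp only [Ψ, LinearMap.coe_mk, AddHom.coe_mk, sylvesterMap_apply_coe, mul_neg,
      ZeroMemClass.coe_zero]
    ring
  have hinj : Injective Ψ := by
    rw [← LinearMap.ker_eq_bot, LinearMap.ker_eq_bot']
    intro h hΨh
    simpa [Ψ, right_ne_zero_of_mul hf0] using congr_arg (fun x => (x.1 : K[X])) hΨh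
  calc c.natDegree = finrank K (degreeLT K c.natDegree) := by
        rw [(degreeLTEquiv K _).finrank_eq, finrank_fin_fun]
    _ ≤ _ := LinearMap.finrank_le_finrank_of_injective (f := Ψ.codRestrict _ hΨ)
          fun x y hxy => hinj (congr_arg Subtype.val hxy)

end Polynomial

open Polynomial IsLocalRing

open scoped Classical in
/-- Let `S` be a local ring with maximal ideal `𝔪` and algebraically closed residue field,
and `g` a monic polynomial of degree `n` over `S`. If the reduction of `g` mod `𝔪` has at
most `r` distinct roots in the residue field, then the discriminant of `g` lies in
`𝔪^(n-r)`. -/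
theorem stmt10 (S : Type) [CommRing S] [IsLocalRing S]
    [IsAlgClosed (IsLocalRing.ResidueField S)] (n r : ℕ) (g : Polynomial S)
    (hmonic : g.Monic) (hdeg : g.natDegree = n)
    (hroots : (g.map (IsLocalRing.residue S)).roots.toFinset.card ≤ r) :
    polyDisc S g ∈ IsLocalRing.maximalIdeal S ^ (n - r) := by
  set gbar := g.map (residue S)
  have hdeg_bar : gbar.natDegree = n := by rw [hmonic.natDegree_map, hdeg]
  have hdeg_bar' : (derivative gbar).natDegree ≤ n - 1 := hdeg_bar ▸ natDegree_derivative_le gbar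
  have hgbar : gbar ≠ 0 := (hmonic.map _).ne_zero
  obtain ⟨c, hc_dvd, hc_dvd', hc_deg⟩ := exists_dvd_dvd_derivative hgbar
  rw [← (IsAlgClosed.splits gbar).natDegree_eq_card_roots, hdeg_bar] at hc_deg
  have hker : n - r ≤ finrank (ResidueField S)
      (LinearMap.ker ((g.sylvester (derivative g) n (n - 1)).map (residue S)).mulVecLin) := by
    calc n - r ≤ c.natDegree := by omega
      _ ≤ _ := natDegree_le_finrank_ker_sylvesterMap hdeg_bar.le hdeg_bar' hgbar hc_dvd hc_dvd'
      _ ≤ _ := LinearMap.finrank_ker_le_finrank_ker_toMatrix _ _ _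
      _ = _ := by
        rw [toMatrix_sylvesterMap', derivative_map, sylvester_map_map, RingHom.mapMatrix_apply]
  rw [polyDisc, hdeg, det_sylvester, resultant]
  exact Ideal.mul_mem_left _ _
    (Ideal.pow_le_pow_right hker (det_mem_maximalIdeal_pow_finrank_ker _))
end

section
/- Let $A$ be a noetherian commutative ring, $f \in A[u]$ monic of degree $n$, and $B = \mathrm{Split}_A(f)$. For any prime $\mathfrak{p}$ of $A$, the fiber ring $B \otimes_A \kappa(\mathfrak{p})$ is a finite-dimensional local complete intersection $\kappa(\mathfrak{p})$-algebra; consequently, the map $A \to B$ is syntomic (flat, of finite presentation, with local complete intersection fibers). -/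
/-- The ideal of relations defining the splitting ring of a monic polynomial
`f = u^n + a_1 u^(n-1) + ... + a_n`: it is generated by the elements
`a_i - (-1)^i e_i(ξ_1, ..., ξ_n)` for `1 ≤ i ≤ n`, where `a_i = f.coeff (n - i)`. -/
noncomputable def splittingIdeal (A : Type) [CommRing A] (n : ℕ) (f : Polynomial A) :
    Ideal (MvPolynomial (Fin n) A) :=
  Ideal.span (Set.range fun i : Fin n =>
    MvPolynomial.C (f.coeff (n - ((i : ℕ) + 1))) -
      (-1 : MvPolynomial (Fin n) A) ^ ((i : ℕ) + 1) *
        MvPolynomial.esymm (Fin n) A ((i : ℕ) + 1))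

/-- The splitting ring `Split_A(f) = A[ξ_1, ..., ξ_n]/I`. -/
noncomputable abbrev SplitRing (A : Type) [CommRing A] (n : ℕ) (f : Polynomial A) : Type :=
  MvPolynomial (Fin n) A ⧸ splittingIdeal A n f

/-!
Adjoin the roots one at a time. Over `A₁ = A[u]/(f)` the polynomial factors as
`f = (u - θ) g` with `g` monic of degree `n - 1`, and `Split_A(f) ≅ Split_{A₁}(g)` as
`A`-algebras, the last root `ξₙ` corresponding to `θ`. Since `A₁` is free of rank `n` over `A`,
induction shows that `Split_A(f)` is a free `A`-module of finite rank, hence flat; it is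
finitely presented by construction. Its fiber at `𝔭` is `Split_{κ(𝔭)}(f)`, which is therefore
finite-dimensional and, by definition, the quotient of `n` polynomial variables by `n` relations.
-/

open Polynomial

theorem Polynomial.Monic.eq_of_coeff_eq_of_lt {R : Type*} [Semiring R] {p q : R[X]} {n : ℕ}
    (hp : p.Monic) (hq : q.Monic) (hpn : p.natDegree = n) (hqn : q.natDegree = n)
    (h : ∀ j < n, p.coeff j = q.coeff j) : p = q := by
  ext j
  rcases lt_trichotomy j n with hj | rfl | hj
  · exact h j hj
  · rw [← hpn, hp.coeff_natDegree, ← hqn.trans hpn.symm, hq.coeff_natDegree]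
  · rw [coeff_eq_zero_of_natDegree_lt (hpn ▸ hj), coeff_eq_zero_of_natDegree_lt (hqn ▸ hj)]

theorem Polynomial.coeff_prod_X_sub_C (R : Type*) {S : Type*} [CommRing R] [CommRing S]
    [Algebra R S] {n k : ℕ} (v : Fin n → S) (hk : k ≤ n) :
    (∏ i, (X - C (v i))).coeff (n - k) =
      (-1) ^ k * MvPolynomial.aeval v (MvPolynomial.esymm (Fin n) R k) := by
  have hcard : Multiset.card (Finset.univ.val.map v) = n := by simp
  have hprod : ∏ i, (X - C (v i)) = ((Finset.univ.val.map v).map fun t ↦ X - C t).prod := by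
    rw [Multiset.map_map]; rfl
  rw [hprod, Multiset.prod_X_sub_C_coeff _ (by rw [hcard]; exact Nat.sub_le n k), hcard,
    Nat.sub_sub_self hk, MvPolynomial.aeval_esymm_eq_multiset_esymm]

section SplittingIdeal

variable {A S : Type} [CommRing A] [CommRing S] [Algebra A S] {n : ℕ} {f : A[X]}

theorem map_eq_prod_X_sub_C_iff_splittingIdeal_le_ker (hm : f.Monic) (hd : f.natDegree = n)
    (v : Fin n → S) :
    f.map (algebraMap A S) = ∏ i, (X - C (v i)) ↔
      splittingIdeal A n f ≤ RingHom.ker (MvPolynomial.aeval (R := A) v) := by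
  rcases subsingleton_or_nontrivial S with _ | _
  · exact iff_of_true (Subsingleton.elim _ _) fun _ _ ↦ Subsingleton.elim _ _
  have hprod : (∏ i, (X - C (v i))).Monic := monic_prod_of_monic _ _ fun i _ ↦ monic_X_sub_C _
  have hgen : ∀ i : Fin n, MvPolynomial.aeval v (MvPolynomial.C (f.coeff (n - ((i : ℕ) + 1))) -
      (-1) ^ ((i : ℕ) + 1) * MvPolynomial.esymm (Fin n) A ((i : ℕ) + 1)) = 0 ↔
      (f.map (algebraMap A S)).coeff (n - ((i : ℕ) + 1)) =
        (∏ i, (X - C (v i))).coeff (n - ((i : ℕ) + 1)) := fun i ↦ by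
    rw [coeff_prod_X_sub_C A v i.isLt, coeff_map]
    simp only [map_sub, map_mul, map_pow, map_neg, map_one, MvPolynomial.aeval_C, sub_eq_zero]
  rw [splittingIdeal, Ideal.span_le, Set.range_subset_iff]
  simp only [SetLike.mem_coe, RingHom.mem_ker, hgen]
  constructor
  · intro h i
    rw [h]
  · intro h
    refine (hm.map _).eq_of_coeff_eq_of_lt (n := n) hprod ?_ ?_ fun j hj ↦ ?_
    · rw [hm.natDegree_map, hd]
    · rw [natDegree_prod_of_monic _ _ fun i _ ↦ monic_X_sub_C (v i)]
      simp
    · simpa [show n - (n - 1 - j + 1) = j by omega] using h ⟨n - 1 - j, by omega⟩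

theorem splittingIdeal_zero : splittingIdeal A 0 f = ⊥ := by
  simp [splittingIdeal, Set.range_eq_empty]

end SplittingIdeal

namespace AdjoinRoot

variable {A : Type} [CommRing A] {f : A[X]}

noncomputable def cofactor (f : A[X]) : (AdjoinRoot f)[X] :=
  f.map (of f) /ₘ (X - C (root f))

theorem X_sub_C_mul_cofactor (f : A[X]) : (X - C (root f)) * cofactor f = f.map (of f) :=
  mul_divByMonic_eq_iff_isRoot.mpr (isRoot_root f)

theorem map_comp_of_eq_X_sub_C_mul {S : Type} [CommRing S] (σ : AdjoinRoot f →+* S) :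
    f.map (σ.comp (of f)) = (X - C (σ (root f))) * (cofactor f).map σ := by
  rw [← map_map, ← X_sub_C_mul_cofactor, Polynomial.map_mul, Polynomial.map_sub, map_X, map_C]

theorem cofactor_monic (hm : f.Monic) : (cofactor f).Monic :=
  .of_mul_monic_left (monic_X_sub_C _) (X_sub_C_mul_cofactor f ▸ hm.map _)

theorem natDegree_cofactor {n : ℕ} (hm : f.Monic) (hd : f.natDegree = n + 1) :
    (cofactor f).natDegree = n := by
  have : Nontrivial (AdjoinRoot f) := Ideal.Quotient.nontrivial_iff.mpr fun htop ↦ by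
    simp [hm.eq_one_of_isUnit (Ideal.span_singleton_eq_top.mp htop)] at hd
  rw [cofactor, natDegree_divByMonic _ (monic_X_sub_C _), hm.natDegree_map, hd,
    natDegree_X_sub_C, Nat.add_sub_cancel]

end AdjoinRoot

namespace SplitRing

open AdjoinRoot (cofactor cofactor_monic natDegree_cofactor)

variable {A S : Type} [CommRing A] [CommRing S] {n : ℕ} {f : A[X]}

noncomputable def root (i : Fin n) : SplitRing A n f :=
  Ideal.Quotient.mk _ (MvPolynomial.X i)

theorem ringHom_ext {φ ψ : SplitRing A n f →+* S}
    (hC : φ.comp (algebraMap A _) = ψ.comp (algebraMap A _)) (hX : ∀ i, φ (root i) = ψ (root i)) :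
    φ = ψ :=
  Ideal.Quotient.ringHom_ext <| MvPolynomial.ringHom_ext (RingHom.congr_fun hC) hX

variable [Algebra A S]

theorem algHom_ext {φ ψ : SplitRing A n f →ₐ[A] S} (h : ∀ i, φ (root i) = ψ (root i)) : φ = ψ :=
  AlgHom.coe_ringHom_injective <| ringHom_ext (by ext; simp) h

noncomputable def lift (hm : f.Monic) (hd : f.natDegree = n) (v : Fin n → S)
    (hv : f.map (algebraMap A S) = ∏ i, (X - C (v i))) : SplitRing A n f →ₐ[A] S :=
  Ideal.Quotient.liftₐ _ (MvPolynomial.aeval v)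
    fun _ ha ↦ (map_eq_prod_X_sub_C_iff_splittingIdeal_le_ker hm hd v).mp hv ha

@[simp]
theorem lift_root (hm : f.Monic) (hd : f.natDegree = n) (v : Fin n → S)
    (hv : f.map (algebraMap A S) = ∏ i, (X - C (v i))) (i : Fin n) :
    lift hm hd v hv (root i) = v i :=
  MvPolynomial.aeval_X v i

theorem map_eq_prod_root (hm : f.Monic) (hd : f.natDegree = n) :
    f.map (algebraMap A (SplitRing A n f)) = ∏ i, (X - C (root i)) := by
  have : MvPolynomial.aeval (R := A) (root (n := n) (f := f)) = Ideal.Quotient.mkₐ A _ :=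
    MvPolynomial.algHom_ext fun i ↦ by simp [root]
  rw [map_eq_prod_X_sub_C_iff_splittingIdeal_le_ker hm hd, this]
  exact fun a ha ↦ Ideal.Quotient.eq_zero_iff_mem.mpr ha

theorem aeval_root (hm : f.Monic) (hd : f.natDegree = n) (i : Fin n) :
    aeval (root i) f = (0 : SplitRing A n f) := by
  rw [aeval_def, ← eval_map, map_eq_prod_root hm hd, eval_prod]
  exact Finset.prod_eq_zero (Finset.mem_univ i) (by simp)

noncomputable def ofAdjoinRoot (hm : f.Monic) (hd : f.natDegree = n + 1) :
    AdjoinRoot f →ₐ[A] SplitRing A (n + 1) f :=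
  AdjoinRoot.liftAlgHom f (Algebra.ofId _ _) (root (Fin.last n)) (aeval_root hm hd _)

@[simp]
theorem ofAdjoinRoot_root (hm : f.Monic) (hd : f.natDegree = n + 1) :
    ofAdjoinRoot hm hd (AdjoinRoot.root f) = root (Fin.last n) :=
  AdjoinRoot.liftAlgHom_root _ _ _ _

theorem map_cofactor_ofAdjoinRoot (hm : f.Monic) (hd : f.natDegree = n + 1) :
    (cofactor f).map (ofAdjoinRoot hm hd).toRingHom =
      ∏ i : Fin n, (X - C (root i.castSucc)) := by
  have h := AdjoinRoot.map_comp_of_eq_X_sub_C_mul (ofAdjoinRoot hm hd).toRingHom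
  rw [← AdjoinRoot.algebraMap_eq, AlgHom.toRingHom_eq_coe, AlgHom.comp_algebraMap,
    map_eq_prod_root hm hd, Fin.prod_univ_castSucc, mul_comm, RingHom.coe_coe,
    ofAdjoinRoot_root] at h
  exact ((monic_X_sub_C _).isRegular.right h).symm

theorem map_eq_prod_lastCases (hm : f.Monic) (hd : f.natDegree = n + 1) :
    f.map (algebraMap A (SplitRing (AdjoinRoot f) n (cofactor f))) =
      ∏ i : Fin (n + 1), (X - C (Fin.lastCases (algebraMap _ _ (AdjoinRoot.root f)) root i)) := by
  rw [IsScalarTower.algebraMap_eq A (AdjoinRoot f), AdjoinRoot.algebraMap_eq,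
    AdjoinRoot.map_comp_of_eq_X_sub_C_mul,
    map_eq_prod_root (cofactor_monic hm) (natDegree_cofactor hm hd),
    Fin.prod_univ_castSucc, mul_comm]
  simp

noncomputable def equivCofactor (hm : f.Monic) (hd : f.natDegree = n + 1) :
    SplitRing A (n + 1) f ≃ₐ[A] SplitRing (AdjoinRoot f) n (cofactor f) :=
  letI := (ofAdjoinRoot hm hd).toRingHom.toAlgebra
  let φ := lift hm hd _ (map_eq_prod_lastCases hm hd)
  let ψ := lift (cofactor_monic hm) (natDegree_cofactor hm hd) _ (map_cofactor_ofAdjoinRoot hm hd)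
  have hφ : φ.comp (ofAdjoinRoot hm hd) = IsScalarTower.toAlgHom A (AdjoinRoot f) _ :=
    AdjoinRoot.algHom_ext (by simp [φ])
  AlgEquiv.ofAlgHom φ (ψ.restrictScalars A)
    (AlgHom.coe_ringHom_injective <| ringHom_ext
      (RingHom.ext fun a ↦ (congrArg φ (ψ.commutes a)).trans (AlgHom.congr_fun hφ a))
      (fun i ↦ by simp [φ, ψ]))
    (algHom_ext fun i ↦ by
      induction i using Fin.lastCases with
      | last =>
        simp only [AlgHom.comp_apply, AlgHom.restrictScalars_apply, AlgHom.id_apply, φ, lift_root,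
          Fin.lastCases_last, AlgHom.commutes]
        exact ofAdjoinRoot_root hm hd
      | cast i => simp [φ, ψ])

theorem free_and_finite (hm : f.Monic) (hd : f.natDegree = n) :
    Module.Free A (SplitRing A n f) ∧ Module.Finite A (SplitRing A n f) := by
  induction n generalizing A with
  | zero =>
    let e : SplitRing A 0 f ≃ₐ[A] A := (Ideal.quotientEquivAlgOfEq A splittingIdeal_zero).trans
      ((AlgEquiv.quotientBot A _).trans (MvPolynomial.isEmptyAlgEquiv A (Fin 0)))
    exact ⟨.of_equiv e.symm.toLinearEquiv, .equiv e.symm.toLinearEquiv⟩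
  | succ n ih =>
    obtain ⟨_, _⟩ := ih (cofactor_monic hm) (natDegree_cofactor hm hd)
    have := hm.free_adjoinRoot
    have := hm.finite_adjoinRoot
    have := Module.Free.trans (R := A) (S := AdjoinRoot f)
      (M := SplitRing (AdjoinRoot f) n (cofactor f))
    have := Module.Finite.trans (R := A) (AdjoinRoot f)
      (SplitRing (AdjoinRoot f) n (cofactor f))
    let e := (equivCofactor hm hd).symm.toLinearEquiv
    exact ⟨.of_equiv e, .equiv e⟩

end SplitRing

theorem stmt17_general (A : Type) [CommRing A] (n : ℕ) (f : Polynomial A)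
    (hmonic : f.Monic) (hdeg : f.natDegree = n) :
    Module.Flat A (SplitRing A n f) ∧
    Algebra.FinitePresentation A (SplitRing A n f) ∧
    ∀ (p : Ideal A) [p.IsPrime],
      FiniteDimensional (FractionRing (A ⧸ p))
        (SplitRing (FractionRing (A ⧸ p)) n
          (f.map ((algebraMap (A ⧸ p) (FractionRing (A ⧸ p))).comp
            (Ideal.Quotient.mk p)))) ∧
      ∃ (d : ℕ) (gs : Fin d → MvPolynomial (Fin d) (FractionRing (A ⧸ p))),
        Nonempty ((MvPolynomial (Fin d) (FractionRing (A ⧸ p)) ⧸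
            Ideal.span (Set.range gs)) ≃ₐ[FractionRing (A ⧸ p)]
          SplitRing (FractionRing (A ⧸ p)) n
            (f.map ((algebraMap (A ⧸ p) (FractionRing (A ⧸ p))).comp
              (Ideal.Quotient.mk p)))) := by
  have := (SplitRing.free_and_finite hmonic hdeg).1
  refine ⟨Module.Flat.of_free, .quotient (Submodule.fg_span (Set.finite_range _)), fun p _ ↦ ?_⟩
  -- the fiber is the splitting ring of the image of `f`, cut out by its `n` defining relations
  exact ⟨(SplitRing.free_and_finite (hmonic.map _) (by rw [hmonic.natDegree_map, hdeg])).2, n, _,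
    ⟨AlgEquiv.refl⟩⟩

/-- For a noetherian commutative ring `A` and `f` monic of degree `n`, the splitting ring
`B = Split_A(f)` is syntomic over `A`: the map `A → B` is flat and of finite presentation,
and for every prime `p` of `A` the fiber ring `B ⊗_A κ(p) = Split_{κ(p)}(f)` is a
finite-dimensional complete intersection `κ(p)`-algebra (a quotient of a polynomial ring
in `d` variables by `d` elements). -/
theorem stmt17 (A : Type) [CommRing A] [IsNoetherianRing A] (n : ℕ) (f : Polynomial A)
    (hmonic : f.Monic) (hdeg : f.natDegree = n) :
    Module.Flat A (SplitRing A n f) ∧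
    Algebra.FinitePresentation A (SplitRing A n f) ∧
    ∀ (p : Ideal A) [p.IsPrime],
      FiniteDimensional (FractionRing (A ⧸ p))
        (SplitRing (FractionRing (A ⧸ p)) n
          (f.map ((algebraMap (A ⧸ p) (FractionRing (A ⧸ p))).comp
            (Ideal.Quotient.mk p)))) ∧
      ∃ (d : ℕ) (gs : Fin d → MvPolynomial (Fin d) (FractionRing (A ⧸ p))),
        Nonempty ((MvPolynomial (Fin d) (FractionRing (A ⧸ p)) ⧸
            Ideal.span (Set.range gs)) ≃ₐ[FractionRing (A ⧸ p)]
          SplitRing (FractionRing (A ⧸ p)) n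
            (f.map ((algebraMap (A ⧸ p) (FractionRing (A ⧸ p))).comp
              (Ideal.Quotient.mk p)))) :=
  stmt17_general A n f hmonic hdeg
end
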